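/- arXiv:1209.0443 — 2 statements merged into one kernel-verified Lean document; each statement's English description precedes it below -/
import Mathlib

section
/- For all a, b ∈ ℂ, the polynomial identity X·F₁(X)² − F₂(X)² = (X − 1)·F₃(X)² holds in ℂ[X], where F₁(X) = X² + (2a + 2b + a²)X + 2ab + b², F₂(X) = (2a+1)X² + (a² + 2ab + 2b)X + b², and F₃(X) = X² − (a² − 2b)X + b². Consequently φ(X) − 1 = (X−1)·(F₃(X)/F₂(X))² wherever F₂(X) ≠ 0, for the rational function φ(X) = X·F₁(X)²/F₂(X)². -/
open Polynomial

section PolynomialIdentity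

variable {R : Type*} [CommRing R]

noncomputable def F₁ (a b : R) : R[X] :=
  X ^ 2 + C (2 * a + 2 * b + a ^ 2) * X + C (2 * a * b + b ^ 2)

noncomputable def F₂ (a b : R) : R[X] :=
  C (2 * a + 1) * X ^ 2 + C (a ^ 2 + 2 * a * b + 2 * b) * X + C (b ^ 2)

noncomputable def F₃ (a b : R) : R[X] :=
  X ^ 2 - C (a ^ 2 - 2 * b) * X + C (b ^ 2)

theorem X_mul_F₁_sq_sub_F₂_sq (a b : R) :
    X * F₁ a b ^ 2 - F₂ a b ^ 2 = (X - 1) * F₃ a b ^ 2 := by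
  simp only [F₁, F₂, F₃, map_add, map_sub, map_mul, map_pow, map_one, map_ofNat]
  ring

end PolynomialIdentity

theorem mul_sq_div_sq_sub_one_of_mul_sq_sub_sq {K : Type*} [Field K] {x p q r : K} (hq : q ≠ 0)
    (h : x * p ^ 2 - q ^ 2 = (x - 1) * r ^ 2) :
    x * p ^ 2 / q ^ 2 - 1 = (x - 1) * (r / q) ^ 2 := by
  rw [div_pow, mul_div_assoc', ← h, sub_div, div_self (pow_ne_zero 2 hq)]

/-- For all `a, b ∈ ℂ`, we have `X·F₁(X)² − F₂(X)² = (X − 1)·F₃(X)²` in `ℂ[X]`, where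
`F₁(X) = X² + (2a + 2b + a²)X + 2ab + b²`, `F₂(X) = (2a+1)X² + (a² + 2ab + 2b)X + b²`,
`F₃(X) = X² − (a² − 2b)X + b²`.  Consequently `φ(X) − 1 = (X−1)·(F₃(X)/F₂(X))²` wherever
`F₂(X) ≠ 0`, for `φ(X) = X·F₁(X)²/F₂(X)²`. -/
theorem key_polynomial_identity (a b : ℂ) :
    (X * (X ^ 2 + C (2 * a + 2 * b + a ^ 2) * X + C (2 * a * b + b ^ 2)) ^ 2
        - (C (2 * a + 1) * X ^ 2 + C (a ^ 2 + 2 * a * b + 2 * b) * X + C (b ^ 2)) ^ 2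
      = (X - 1) * (X ^ 2 - C (a ^ 2 - 2 * b) * X + C (b ^ 2)) ^ 2) ∧
    ∀ x : ℂ, (2 * a + 1) * x ^ 2 + (a ^ 2 + 2 * a * b + 2 * b) * x + b ^ 2 ≠ 0 →
      x * (x ^ 2 + (2 * a + 2 * b + a ^ 2) * x + 2 * a * b + b ^ 2) ^ 2
          / ((2 * a + 1) * x ^ 2 + (a ^ 2 + 2 * a * b + 2 * b) * x + b ^ 2) ^ 2 - 1
        = (x - 1) * ((x ^ 2 - (a ^ 2 - 2 * b) * x + b ^ 2)
          / ((2 * a + 1) * x ^ 2 + (a ^ 2 + 2 * a * b + 2 * b) * x + b ^ 2)) ^ 2 := by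
  refine ⟨X_mul_F₁_sq_sub_F₂_sq a b, fun x hx => mul_sq_div_sq_sub_one_of_mul_sq_sub_sq hx ?_⟩
  have h := congrArg (eval x) (X_mul_F₁_sq_sub_F₂_sq a b)
  simp only [F₁, F₂, F₃, eval_mul, eval_sub, eval_add, eval_pow, eval_C, eval_X, eval_one] at h
  linear_combination h
end

section
/- Let a ∈ ℂ with a(a − 2) ≠ 0, 2a + 1 ≠ 0, 3a − 1 ≠ 0, a ≠ 1, a + 8 ≠ 0, and set λ = (3a − 1)³(a + 8)²(a − 1)/(27a(a − 2)⁵) and T = (a/(a − 2))². Assume λ ≠ 0 and λ ≠ 1. Then the j-invariant of the elliptic curve in Weierstrass form y² = x(x − 1)(x − λ) over ℂ (i.e., the Weierstrass curve with coefficients a₁ = 0, a₂ = −(λ + 1), a₃ = 0, a₄ = λ, a₆ = 0) equals (9765625T⁶ − 23437500T⁵ + 19218750T⁴ − 6087500T³ + 560625T² + 166368T + 256)³ / (729·T·(T − 1)²·(25T − 16)⁴·(25T − 1)⁶). -/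
/-!
With `p = λ(1 − λ)` one has `c₄ = 16(1 − p)` and `Δ = 16p²`, so `j = 256(1 − p)³/p²`.
In case II, `p` depends on `a` only through `T`: for `x = a/(a − 2)` we get
`λ = (5x + 1)³(5x − 4)²(x + 1)/(432x)`, and `1 − λ` is the same expression at `−x`.
Hence `p = −F/(432²T)` with `F = (25T − 1)³(25T − 16)²(T − 1)`, and the numerator of `j`
is `F + 432²T`.
-/

/-- The Legendre-form Weierstrass curve `y² = x(x − 1)(x − λ)`, i.e. the Weierstrass curve
with coefficients `a₁ = 0`, `a₂ = −(λ + 1)`, `a₃ = 0`, `a₄ = λ`, `a₆ = 0`. -/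
def legendreCurve (lam : ℂ) : WeierstrassCurve ℂ :=
  ⟨0, -(lam + 1), 0, lam, 0⟩

theorem legendreCurve_c₄ (lam : ℂ) : (legendreCurve lam).c₄ = 16 * (1 - lam * (1 - lam)) := by
  simp only [legendreCurve, WeierstrassCurve.c₄, WeierstrassCurve.b₂, WeierstrassCurve.b₄]
  ring

theorem legendreCurve_Δ (lam : ℂ) : (legendreCurve lam).Δ = 16 * (lam * (1 - lam)) ^ 2 := by
  simp only [legendreCurve, WeierstrassCurve.Δ, WeierstrassCurve.b₂, WeierstrassCurve.b₄,
    WeierstrassCurve.b₆, WeierstrassCurve.b₈]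
  ring

theorem legendreCurve_c₄_pow_three_div_Δ (lam : ℂ) :
    (legendreCurve lam).c₄ ^ 3 / (legendreCurve lam).Δ
      = 256 * (1 - lam * (1 - lam)) ^ 3 / (lam * (1 - lam)) ^ 2 := by
  rw [legendreCurve_c₄, legendreCurve_Δ, mul_pow, mul_div_mul_comm, mul_div_assoc]
  norm_num

theorem one_sub_pow_three_div_sq_of_eq_neg_div {K : Type*} [Field K] {p c T : K} (F : K)
    (hc : c ≠ 0) (hT : T ≠ 0) (hp : p = -F / (c * T)) :
    (1 - p) ^ 3 / p ^ 2 = (F + c * T) ^ 3 / (c * T * F ^ 2) := by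
  have hcT : c * T ≠ 0 := mul_ne_zero hc hT
  have h1 : 1 - p = (F + c * T) / (c * T) := by rw [hp]; field_simp; ring
  rw [h1, hp, div_pow, neg_div, neg_sq, div_pow, div_div_div_eq]
  field_simp

theorem caseII_lambda_mul_one_sub {K : Type*} [Field K] [CharZero K] {a lam T : K}
    (ha : a * (a - 2) ≠ 0)
    (hlam : lam = (3 * a - 1) ^ 3 * (a + 8) ^ 2 * (a - 1) / (27 * a * (a - 2) ^ 5))
    (hT : T = (a / (a - 2)) ^ 2) :
    lam * (1 - lam) = -((25 * T - 1) ^ 3 * (25 * T - 16) ^ 2 * (T - 1)) / (186624 * T) := by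
  have ha0 : a ≠ 0 := left_ne_zero_of_mul ha
  have ha2 : a - 2 ≠ 0 := right_ne_zero_of_mul ha
  subst hlam hT
  field_simp
  ring

theorem caseII_j_invariant_general (a lam T : ℂ)
    (ha : a * (a - 2) ≠ 0)
    (hlam : lam = (3 * a - 1) ^ 3 * (a + 8) ^ 2 * (a - 1) / (27 * a * (a - 2) ^ 5))
    (hT : T = (a / (a - 2)) ^ 2) :
    (legendreCurve lam).c₄ ^ 3 / (legendreCurve lam).Δ
      = (9765625 * T ^ 6 - 23437500 * T ^ 5 + 19218750 * T ^ 4 - 6087500 * T ^ 3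
          + 560625 * T ^ 2 + 166368 * T + 256) ^ 3
        / (729 * T * (T - 1) ^ 2 * (25 * T - 16) ^ 4 * (25 * T - 1) ^ 6) := by
  have hT0 : T ≠ 0 := by
    rw [hT]; exact pow_ne_zero 2 (div_ne_zero (left_ne_zero_of_mul ha) (right_ne_zero_of_mul ha))
  set F := (25 * T - 1) ^ 3 * (25 * T - 16) ^ 2 * (T - 1)
  have hN : F + 186624 * T = 9765625 * T ^ 6 - 23437500 * T ^ 5 + 19218750 * T ^ 4
      - 6087500 * T ^ 3 + 560625 * T ^ 2 + 166368 * T + 256 := by ring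
  have hD : 186624 * T * F ^ 2
      = 256 * (729 * T * (T - 1) ^ 2 * (25 * T - 16) ^ 4 * (25 * T - 1) ^ 6) := by ring
  rw [legendreCurve_c₄_pow_three_div_Δ, mul_div_assoc,
    one_sub_pow_three_div_sq_of_eq_neg_div F (by norm_num) hT0
      (caseII_lambda_mul_one_sub ha hlam hT), hN, hD, mul_div_assoc',
    mul_div_mul_left _ _ (by norm_num)]

/-- In degenerate case II, with `λ = (3a − 1)³(a + 8)²(a − 1)/(27a(a − 2)⁵)` and
`T = (a/(a − 2))²`, the j-invariant `c₄³/Δ` of the elliptic curve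
`y² = x(x − 1)(x − λ)` equals the stated rational function of `T`. -/
theorem caseII_j_invariant (a lam T : ℂ)
    (ha : a * (a - 2) ≠ 0) (h1 : 2 * a + 1 ≠ 0) (h2 : 3 * a - 1 ≠ 0)
    (h3 : a ≠ 1) (h4 : a + 8 ≠ 0)
    (hlam : lam = (3 * a - 1) ^ 3 * (a + 8) ^ 2 * (a - 1) / (27 * a * (a - 2) ^ 5))
    (hT : T = (a / (a - 2)) ^ 2)
    (hl0 : lam ≠ 0) (hl1 : lam ≠ 1) :
    (legendreCurve lam).c₄ ^ 3 / (legendreCurve lam).Δ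
      = (9765625 * T ^ 6 - 23437500 * T ^ 5 + 19218750 * T ^ 4 - 6087500 * T ^ 3
          + 560625 * T ^ 2 + 166368 * T + 256) ^ 3
        / (729 * T * (T - 1) ^ 2 * (25 * T - 16) ^ 4 * (25 * T - 1) ^ 6) :=
  caseII_j_invariant_general a lam T ha hlam hT
end
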